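/- arXiv:1404.1606 — 5 statements merged into one kernel-verified Lean document; each statement's English description precedes it below -/
import Mathlib

section
/- Let R be a ring, and let 0 → W → M₂ →^f M₃ → 0 be a short exact sequence of R-modules with W simple. Suppose v₂ ∈ M₂, v₃ := f(v₂) generates M₃ as an R-module, and the extension does not split (there is no R-submodule M' ⊆ M₂ with M' ⊕ ker(f) = M₂, i.e. M' ∩ ker f = 0 and M' + ker f = M₂). Then v₂ generates M₂ as an R-module. -/
/-- A non-split extension of a cyclic module by a simple module is cyclic. -/
theorem cyclic_of_nonsplit_extension_by_simple
    {R : Type*} [Ring R] {M₂ M₃ : Type*}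
    [AddCommGroup M₂] [Module R M₂] [AddCommGroup M₃] [Module R M₃]
    (f : M₂ →ₗ[R] M₃) (hsurj : Function.Surjective f)
    (hsimple : IsSimpleModule R (LinearMap.ker f))
    (v₂ : M₂) (hcyc : Submodule.span R {f v₂} = ⊤)
    (hnonsplit : ¬ ∃ M' : Submodule R M₂,
        M' ⊓ LinearMap.ker f = ⊥ ∧ M' ⊔ LinearMap.ker f = ⊤) :
    Submodule.span R {v₂} = ⊤ := by
  set N := Submodule.span R {v₂} with hN
  have hmap : Submodule.map f N = ⊤ := by
    rw [hN, Submodule.map_span, Set.image_singleton, hcyc]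
  have hsup : N ⊔ LinearMap.ker f = ⊤ := by
    rw [← Submodule.comap_map_eq, hmap, Submodule.comap_top]
  have := eq_bot_or_eq_top (Submodule.comap (LinearMap.ker f).subtype N)
  rcases this with h | h
  · exfalso
    apply hnonsplit
    refine ⟨N, ?_, hsup⟩
    have := congrArg (Submodule.map (LinearMap.ker f).subtype) h
    rwa [Submodule.map_comap_subtype, Submodule.map_bot, inf_comm] at this
  · have hle : LinearMap.ker f ≤ N := by
      have := congrArg (Submodule.map (LinearMap.ker f).subtype) h
      rw [Submodule.map_comap_subtype, Submodule.map_top, Submodule.range_subtype] at this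
      exact this.symm.le.trans inf_le_right
    rw [← hsup, sup_eq_left.mpr hle]
end

section
/- Let A be a ℚ-algebra (or any associative ring in which 2 is invertible) containing elements ξ₀, ξ₁, ξ₂, … and η₀, η₁, η₂, … satisfying ξᵢξⱼ + ξⱼξᵢ = 0, ηᵢηⱼ + ηⱼηᵢ = 0, and ηᵢξⱼ = ξ_{j+1}ηᵢ − ξⱼη_{i+1} for all i, j ≥ 0. Define νᵢ¹ := ξ₀ηᵢ. Then νᵢ¹νⱼ¹ + νⱼ¹νᵢ¹ = 0 for all i, j ≥ 0. -/
/-- In the COHA of the `A₂` quiver, the elements `νᵢ¹ = ξ₀ ηᵢ` pairwise anticommute. -/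
theorem nu1_anticommute {A : Type*} [Ring A] [Algebra ℚ A]
    (ξ η : ℕ → A)
    (hξ : ∀ i j, ξ i * ξ j + ξ j * ξ i = 0)
    (hη : ∀ i j, η i * η j + η j * η i = 0)
    (hmix : ∀ i j, η i * ξ j = ξ (j + 1) * η i - ξ j * η (i + 1)) :
    ∀ i j, (ξ 0 * η i) * (ξ 0 * η j) + (ξ 0 * η j) * (ξ 0 * η i) = 0 := by
  have hx0 : ξ 0 * ξ 0 = 0 := by
    have h := hξ 0 0
    have h2 : (2 : ℚ) • (ξ 0 * ξ 0) = 0 := by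
      rw [two_smul]; exact h
    have := smul_eq_zero.mp h2
    simpa using this.resolve_left (by norm_num)
  have e1 : ∀ i j, (ξ 0 * η i) * (ξ 0 * η j) = ξ 0 * ξ 1 * (η i * η j) := by
    intro i j
    calc (ξ 0 * η i) * (ξ 0 * η j) = ξ 0 * (η i * ξ 0) * η j := by noncomm_ring
      _ = ξ 0 * (ξ 1 * η i - ξ 0 * η (i + 1)) * η j := by rw [hmix i 0]
      _ = ξ 0 * ξ 1 * (η i * η j) - (ξ 0 * ξ 0) * (η (i + 1) * η j) := by noncomm_ring
      _ = ξ 0 * ξ 1 * (η i * η j) := by rw [hx0]; noncomm_ring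
  intro i j
  rw [e1 i j, e1 j i, ← mul_add, hη, mul_zero]
end

section
/- Let A be a ℚ-algebra containing elements ξ₀, ξ₁, … and η₀, η₁, … satisfying ξᵢξⱼ + ξⱼξᵢ = 0, ηᵢηⱼ + ηⱼηᵢ = 0, and ηᵢξⱼ = ξ_{j+1}ηᵢ − ξⱼη_{i+1} for all i, j ≥ 0. Define νᵢ² := ξᵢη₀. Then νᵢ²νⱼ² + νⱼ²νᵢ² = 0 for all i, j ≥ 0. -/
/-- In the COHA of the `A₂` quiver, the elements `νᵢ² = ξᵢ η₀` pairwise anticommute. -/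
theorem nu2_anticommute {A : Type*} [Ring A] [Algebra ℚ A]
    (ξ η : ℕ → A)
    (hξ : ∀ i j, ξ i * ξ j + ξ j * ξ i = 0)
    (hη : ∀ i j, η i * η j + η j * η i = 0)
    (hmix : ∀ i j, η i * ξ j = ξ (j + 1) * η i - ξ j * η (i + 1)) :
    ∀ i j, (ξ i * η 0) * (ξ j * η 0) + (ξ j * η 0) * (ξ i * η 0) = 0 := by
  have h00 : η 0 * η 0 = 0 := by
    have h := hη 0 0
    have h2 : (2 : ℚ) • (η 0 * η 0) = 0 := by
      rw [two_smul]; exact h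
    have := congrArg (fun x => ((2 : ℚ)⁻¹) • x) h2
    simpa [smul_smul] using this
  have key : ∀ i j, (ξ i * η 0) * (ξ j * η 0) = -(ξ i * ξ j * (η 1 * η 0)) := by
    intro i j
    calc (ξ i * η 0) * (ξ j * η 0) = ξ i * (η 0 * ξ j) * η 0 := by noncomm_ring
      _ = ξ i * (ξ (j + 1) * η 0 - ξ j * η 1) * η 0 := by rw [hmix]
      _ = ξ i * ξ (j + 1) * (η 0 * η 0) - ξ i * ξ j * (η 1 * η 0) := by noncomm_ring
      _ = -(ξ i * ξ j * (η 1 * η 0)) := by rw [h00]; noncomm_ring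
  intro i j
  calc (ξ i * η 0) * (ξ j * η 0) + (ξ j * η 0) * (ξ i * η 0)
      = -(ξ i * ξ j * (η 1 * η 0)) + -(ξ j * ξ i * (η 1 * η 0)) := by rw [key i j, key j i]
    _ = -((ξ i * ξ j + ξ j * ξ i) * (η 1 * η 0)) := by noncomm_ring
    _ = 0 := by rw [hξ]; simp
end

section
/- Fix d ∈ ℕ and a commutative ring R. For symmetric polynomials f₁ ∈ R[x₁,…,xₙ]^{Sₙ} and f₂ ∈ R[x₁,…,x_m]^{S_m}, define (f₁·f₂)(x₁,…,x_{n+m}) := Σ f₁(x_{i₁},…,x_{iₙ}) f₂(x_{j₁},…,x_{j_m}) ∏_{k,l} (x_{j_l} − x_{i_k})^{d−1}, the sum over all shuffles, i.e. all partitions {1,…,n+m} = {i₁<…<iₙ} ⊔ {j₁<…<j_m} (assume d ≥ 1 so the kernel is polynomial). Then this product is associative. -/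
open MvPolynomial

/-- The shuffle product on symmetric polynomials: the multiplication of the
Cohomological Hall algebra of the quiver with one vertex and `d` loops. -/
noncomputable def shuffleMul {R : Type*} [CommRing R] (d n m : ℕ)
    (f₁ : MvPolynomial (Fin n) R) (f₂ : MvPolynomial (Fin m) R) :
    MvPolynomial (Fin (n + m)) R :=
  ∑ s : {s : Finset (Fin (n + m)) // s.card = n},
    (rename (fun i => ((s.1.orderIsoOfFin s.2 i : s.1) : Fin (n + m))) f₁) *
    (rename (fun j => (((s.1ᶜ).orderIsoOfFin
        (by rw [Finset.card_compl, s.2, Fintype.card_fin]; omega) j : (s.1ᶜ : Finset (Fin (n+m)))) : Fin (n + m))) f₂) *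
    ∏ i ∈ s.1, ∏ j ∈ s.1ᶜ, (X j - X i) ^ (d - 1)

/-!
Both iterated products expand into one sum over pairs `(A, B)` of disjoint sets of variables with
`#A = n`, `#B = m`: its term places `f₁` on `A`, `f₂` on `B`, `f₃` on the complement `C`, times the
kernels `K(A, B) K(A, C) K(B, C)`. On the right this is just expanding the inner product placed on
`Aᶜ`, since `K(A, Aᶜ) = K(A, B) K(A, C)`; on the left the outer product picks `S = A ∪ B` first and
`K(A ∪ B, C) = K(A, C) K(B, C)`. Expanding the inner product requires that renaming along an order
embedding commutes with the placement of variables.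
-/

open Finset

section PlacedShuffle

variable {R : Type*} [CommRing R] {N M a b c : ℕ}

/-- Junk value `0` unless `#s = k`. -/
noncomputable def place {k : ℕ} (s : Finset (Fin N)) (f : MvPolynomial (Fin k) R) :
    MvPolynomial (Fin N) R :=
  if h : #s = k then rename (s.orderEmbOfFin h) f else 0

theorem place_of_card {k : ℕ} {s : Finset (Fin N)} (h : #s = k) (f : MvPolynomial (Fin k) R) :
    place s f = rename (s.orderEmbOfFin h) f :=
  dif_pos h

theorem rename_place {k : ℕ} (g : Fin N ↪o Fin M) (s : Finset (Fin N))
    (f : MvPolynomial (Fin k) R) :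
    rename g (place s f) = place (s.map g.toEmbedding) f := by
  by_cases h : #s = k
  · have h' : #(s.map g.toEmbedding) = k := by rwa [card_map]
    rw [place_of_card h, place_of_card h', rename_rename]
    exact congrArg (fun e => rename e f) <| orderEmbOfFin_unique h'
      (fun i => mem_map_of_mem _ (orderEmbOfFin_mem s h i))
      (g.strictMono.comp (s.orderEmbOfFin h).strictMono)
  · have h' : #(s.map g.toEmbedding) ≠ k := by rwa [card_map]
    rw [place, place, dif_neg h, dif_neg h', map_zero]

variable (R) in
noncomputable def shuffleKernel (d : ℕ) (A B : Finset (Fin N)) : MvPolynomial (Fin N) R :=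
  ∏ i ∈ A, ∏ j ∈ B, (X j - X i) ^ (d - 1)

theorem rename_shuffleKernel (g : Fin N ↪ Fin M) (d : ℕ) (A B : Finset (Fin N)) :
    rename g (shuffleKernel R d A B) = shuffleKernel R d (A.map g) (B.map g) := by
  simp only [shuffleKernel, map_prod, map_pow, map_sub, rename_X, prod_map]

theorem shuffleKernel_union_left (d : ℕ) {A B : Finset (Fin N)} (C : Finset (Fin N))
    (h : Disjoint A B) :
    shuffleKernel R d (A ∪ B) C = shuffleKernel R d A C * shuffleKernel R d B C :=
  prod_union h

theorem shuffleKernel_union_right (d : ℕ) (A : Finset (Fin N)) {B C : Finset (Fin N)}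
    (h : Disjoint B C) :
    shuffleKernel R d A (B ∪ C) = shuffleKernel R d A B * shuffleKernel R d A C := by
  simp only [shuffleKernel, prod_union h, prod_mul_distrib]

noncomputable def placedShuffle (d : ℕ) (U : Finset (Fin N)) (f₁ : MvPolynomial (Fin a) R)
    (f₂ : MvPolynomial (Fin b) R) : MvPolynomial (Fin N) R :=
  ∑ A ∈ powersetCard a U, place A f₁ * place (U \ A) f₂ * shuffleKernel R d A (U \ A)

theorem shuffleMul_eq_placedShuffle (d : ℕ) (f₁ : MvPolynomial (Fin a) R)
    (f₂ : MvPolynomial (Fin b) R) :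
    shuffleMul d a b f₁ f₂ = placedShuffle d univ f₁ f₂ := by
  rw [placedShuffle, sum_subtype _ (p := fun s => #s = a) (by simp [mem_powersetCard])]
  refine sum_congr rfl fun s _ => ?_
  simp only [coe_orderIsoOfFin_apply, ← compl_eq_univ_sdiff, place_of_card s.2,
    place_of_card (k := b) (s := s.1ᶜ) (by rw [card_compl, s.2, Fintype.card_fin]; omega)]
  rfl

theorem rename_placedShuffle (d : ℕ) (g : Fin N ↪o Fin M) (U : Finset (Fin N))
    (f₁ : MvPolynomial (Fin a) R) (f₂ : MvPolynomial (Fin b) R) :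
    rename g (placedShuffle d U f₁ f₂) = placedShuffle d (U.map g.toEmbedding) f₁ f₂ := by
  simp only [placedShuffle, map_sum, map_mul, rename_place, powersetCard_map, sum_map,
    RelEmbedding.coe_toEmbedding, mapEmbedding_apply, ← Finset.map_sdiff]
  refine sum_congr rfl fun A _ => ?_
  exact congrArg _ (rename_shuffleKernel g.toEmbedding d A (U \ A))

theorem place_shuffleMul (d : ℕ) {U : Finset (Fin N)} (hU : #U = a + b)
    (f₁ : MvPolynomial (Fin a) R) (f₂ : MvPolynomial (Fin b) R) :
    place U (shuffleMul d a b f₁ f₂) = placedShuffle d U f₁ f₂ := by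
  rw [place_of_card hU, shuffleMul_eq_placedShuffle, rename_placedShuffle,
    map_orderEmbOfFin_univ]

theorem rename_finCongr_shuffleMul (d : ℕ) (h : a + b = N) (f₁ : MvPolynomial (Fin a) R)
    (f₂ : MvPolynomial (Fin b) R) :
    rename (finCongr h) (shuffleMul d a b f₁ f₂) = placedShuffle d univ f₁ f₂ := by
  rw [shuffleMul_eq_placedShuffle]
  exact (rename_placedShuffle d (Fin.castOrderIso h).toOrderEmbedding univ f₁ f₂).trans
    (by congr 1; exact map_univ_of_surjective (Fin.castOrderIso h).surjective)

noncomputable def placedShuffle₃ (d : ℕ) (U : Finset (Fin N)) (f₁ : MvPolynomial (Fin a) R)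
    (f₂ : MvPolynomial (Fin b) R) (f₃ : MvPolynomial (Fin c) R) : MvPolynomial (Fin N) R :=
  ∑ x ∈ (powersetCard a U).sigma (fun A => powersetCard b (U \ A)),
    place x.1 f₁ * place x.2 f₂ * place ((U \ x.1) \ x.2) f₃ *
      (shuffleKernel R d x.1 x.2 * shuffleKernel R d x.1 ((U \ x.1) \ x.2) *
        shuffleKernel R d x.2 ((U \ x.1) \ x.2))

theorem placedShuffle_shuffleMul_right (d : ℕ) {U : Finset (Fin N)} (hU : #U = a + (b + c))
    (f₁ : MvPolynomial (Fin a) R) (f₂ : MvPolynomial (Fin b) R) (f₃ : MvPolynomial (Fin c) R) :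
    placedShuffle d U f₁ (shuffleMul d b c f₂ f₃) = placedShuffle₃ d U f₁ f₂ f₃ := by
  rw [placedShuffle, placedShuffle₃, sum_sigma]
  refine sum_congr rfl fun A hA => ?_
  obtain ⟨hAU, hAcard⟩ := mem_powersetCard.1 hA
  rw [place_shuffleMul d (by rw [card_sdiff_of_subset hAU, hU, hAcard]; omega), placedShuffle,
    mul_sum, sum_mul]
  refine sum_congr rfl fun B hB => ?_
  have hK : shuffleKernel R d A (U \ A) =
      shuffleKernel R d A B * shuffleKernel R d A ((U \ A) \ B) := by
    rw [← shuffleKernel_union_right d A disjoint_sdiff,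
      union_sdiff_of_subset (mem_powersetCard.1 hB).1]
  rw [hK]
  ring

theorem placedShuffle_shuffleMul_left (d : ℕ) (U : Finset (Fin N))
    (f₁ : MvPolynomial (Fin a) R) (f₂ : MvPolynomial (Fin b) R) (f₃ : MvPolynomial (Fin c) R) :
    placedShuffle d U (shuffleMul d a b f₁ f₂) f₃ = placedShuffle₃ d U f₁ f₂ f₃ := by
  have expand : placedShuffle d U (shuffleMul d a b f₁ f₂) f₃ =
      ∑ x ∈ (powersetCard (a + b) U).sigma (fun S => powersetCard a S),
        place x.2 f₁ * place (x.1 \ x.2) f₂ * place (U \ x.1) f₃ *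
          (shuffleKernel R d x.2 (x.1 \ x.2) * shuffleKernel R d x.1 (U \ x.1)) := by
    rw [placedShuffle, sum_sigma]
    refine sum_congr rfl fun S hS => ?_
    rw [place_shuffleMul d (mem_powersetCard.1 hS).2, placedShuffle, sum_mul, sum_mul]
    exact sum_congr rfl fun A _ => by ring
  rw [expand, placedShuffle₃]
  symm
  -- `(A, B) ↦ (A ∪ B, A)`, with inverse `(S, A) ↦ (A, S \ A)`
  refine sum_nbij' (fun x => ⟨x.1 ∪ x.2, x.1⟩) (fun x => ⟨x.2, x.1 \ x.2⟩) ?_ ?_ ?_ ?_ ?_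
  all_goals simp only [Sigma.forall, mem_sigma, mem_powersetCard]
  · rintro A B ⟨⟨hAU, hA⟩, hBUA, hB⟩
    have hAB : Disjoint A B := disjoint_sdiff.mono_right hBUA
    exact ⟨⟨union_subset hAU (hBUA.trans sdiff_subset),
      by rw [card_union_of_disjoint hAB, hA, hB]⟩, subset_union_left, hA⟩
  · rintro S A ⟨⟨hSU, hS⟩, hAS, hA⟩
    exact ⟨⟨hAS.trans hSU, hA⟩, sdiff_subset_sdiff hSU subset_rfl,
      by rw [card_sdiff_of_subset hAS, hS, hA]; omega⟩
  · rintro A B ⟨-, hBUA, -⟩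
    rw [union_sdiff_cancel_left (disjoint_sdiff.mono_right hBUA)]
  · rintro S A ⟨-, hAS, -⟩
    rw [union_sdiff_of_subset hAS]
  · rintro A B ⟨-, hBUA, -⟩
    have hAB : Disjoint A B := disjoint_sdiff.mono_right hBUA
    rw [union_sdiff_cancel_left hAB, sdiff_sdiff_left, sup_eq_union,
      shuffleKernel_union_left d _ hAB]
    ring

end PlacedShuffle

theorem shuffleMul_assoc_general {R : Type*} [CommRing R] (d : ℕ)
    (n m p : ℕ)
    (f₁ : MvPolynomial (Fin n) R) (f₂ : MvPolynomial (Fin m) R)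
    (f₃ : MvPolynomial (Fin p) R) :
    rename (finCongr (Nat.add_assoc n m p))
        (shuffleMul d (n + m) p (shuffleMul d n m f₁ f₂) f₃) =
      shuffleMul d n (m + p) f₁ (shuffleMul d m p f₂ f₃) := by
  rw [rename_finCongr_shuffleMul, placedShuffle_shuffleMul_left, shuffleMul_eq_placedShuffle,
    placedShuffle_shuffleMul_right d (by simp)]

/-- Associativity of the shuffle product. -/
theorem shuffleMul_assoc {R : Type*} [CommRing R] (d : ℕ) (hd : 1 ≤ d)
    (n m p : ℕ)
    (f₁ : MvPolynomial (Fin n) R) (f₂ : MvPolynomial (Fin m) R)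
    (f₃ : MvPolynomial (Fin p) R)
    (h₁ : f₁.IsSymmetric) (h₂ : f₂.IsSymmetric) (h₃ : f₃.IsSymmetric) :
    rename (finCongr (Nat.add_assoc n m p))
        (shuffleMul d (n + m) p (shuffleMul d n m f₁ f₂) f₃) =
      shuffleMul d n (m + p) f₁ (shuffleMul d m p f₂ f₃) :=
  shuffleMul_assoc_general d n m p f₁ f₂ f₃
end

section
/- Let A be an abelian category with full subcategories T and F forming a torsion pair, and let P ∈ A. Call a pair (E, f) with f : P → E 'stable framed' if either f is an epimorphism, or coker(f) ≠ 0 and coker(f) ∈ T. Then for any stable framed (E, f) with E ∈ F, every automorphism h of E with h ∘ f = f equals the identity. -/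
open CategoryTheory CategoryTheory.Limits

/-- Stable framed objects with respect to a torsion pair `(T, F)` have trivial
automorphism groups: if `coker f` is either zero (`f` epi) or a nonzero torsion
object, and `E` is torsion-free, then any automorphism `h` of `E` with
`h ∘ f = f` is the identity. -/
theorem stable_framed_torsion_pair_aut_trivial
    {𝒜 : Type*} [Category 𝒜] [Abelian 𝒜]
    (T F : 𝒜 → Prop)
    (hhom : ∀ (X Y : 𝒜), T X → F Y → ∀ g : X ⟶ Y, g = 0)
    (hdecomp : ∀ X : 𝒜, ∃ (T' : 𝒜) (i : T' ⟶ X),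
      Mono i ∧ T T' ∧ F (cokernel i))
    (P E : 𝒜) (f : P ⟶ E) (hE : F E)
    (hstable : Epi f ∨ (¬ IsZero (cokernel f) ∧ T (cokernel f)))
    (h : E ⟶ E) (hiso : IsIso h) (hf : f ≫ h = f) :
    h = 𝟙 E := by
  have hzero : f ≫ (h - 𝟙 E) = 0 := by
    simp [Preadditive.comp_sub, hf]
  rcases hstable with hepi | ⟨_, hT⟩
  · rw [← sub_eq_zero]
    exact (Preadditive.epi_iff_cancel_zero f).mp hepi _ _ hzero
  · have hdesc : cokernel.desc f (h - 𝟙 E) hzero = 0 := hhom _ _ hT hE _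
    have : cokernel.π f ≫ cokernel.desc f (h - 𝟙 E) hzero = h - 𝟙 E :=
      cokernel.π_desc _ _ _
    rw [hdesc, comp_zero] at this
    rw [← sub_eq_zero, ← this]
end
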